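/- Let U be a finite-dimensional commutative ℂ-algebra with a fixed basis, and suppose a distinguished element E ∈ U acts by multiplication with pairwise distinct eigenvalues w₁, …, w_μ. Then U has no nonzero nilpotent elements, i.e., U ≅ ℂ^μ as ℂ-algebras. -/

import Mathlib

/-!
Multiplication by `E` is diagonal in the basis `b` with distinct eigenvalues, so its eigenspaces
are the lines `K ∙ b i`. As `E` commutes with everything, `b i * b j` lies in both the `w i`- and
the `w j`-eigenspace, hence vanishes for `i ≠ j`, while `b i * b i = c i • b i`. Expanding
`b i = b i * 1` shows `c i ≠ 0`, so the vectors `(c i)⁻¹ • b i` form a basis of orthogonal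
idempotents, in whose coordinates multiplication is componentwise.
-/

open Module

section OrthogonalIdempotentBasis

variable {K A ι : Type*} [CommSemiring K] [Semiring A] [Algebra K A] [Fintype ι] [DecidableEq ι]
  (e : Basis ι K A)

theorem Module.Basis.equivFun_mul (he : OrthogonalIdempotents ⇑e) (x y : A) :
    e.equivFun (x * y) = e.equivFun x * e.equivFun y := by
  have h : (LinearMap.mul K A).compr₂ e.equivFun.toLinearMap =
      (LinearMap.mul K (ι → K)).compl₁₂ e.equivFun.toLinearMap e.equivFun.toLinearMap := by
    refine LinearMap.ext_basis e e fun i j => ?_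
    ext k
    simp only [LinearMap.compr₂_apply, LinearMap.compl₁₂_apply, LinearMap.mul_apply',
      LinearEquiv.coe_coe, Pi.mul_apply]
    obtain rfl | hij := eq_or_ne i j
    · rw [(he.idem i).eq, e.equivFun_self]
      split_ifs <;> simp
    · rw [he.ortho hij, map_zero, e.equivFun_self, e.equivFun_self]
      split_ifs <;> simp_all
  exact LinearMap.congr_fun₂ h x y

theorem Module.Basis.equivFun_one (he : OrthogonalIdempotents ⇑e) : e.equivFun 1 = 1 := by
  have h := e.equivFun_mul he 1 (e.equivFun.symm 1)
  rw [one_mul, LinearEquiv.apply_symm_apply, mul_one] at h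
  exact h.symm

noncomputable def Module.Basis.algEquivPiOfOrthogonalIdempotents
    (he : OrthogonalIdempotents ⇑e) : A ≃ₐ[K] (ι → K) :=
  AlgEquiv.ofLinearEquiv e.equivFun (e.equivFun_one he) (e.equivFun_mul he)

end OrthogonalIdempotentBasis

section Eigenbasis

variable {K A ι : Type*} [Field K] [CommRing A] [Algebra K A] {E : A}

theorem mul_eq_zero_of_mul_eq_smul {x y : A} {a a' : K} (hx : E * x = a • x)
    (hy : E * y = a' • y) (h : a ≠ a') : x * y = 0 := by
  have : (a - a') • (x * y) = 0 := by
    rw [sub_smul, ← smul_mul_assoc, ← hx, ← mul_smul_comm, ← hy]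
    ring
  exact (smul_eq_zero.mp this).resolve_left (sub_ne_zero.mpr h)

variable (b : Basis ι K A) {w : ι → K}

theorem Module.Basis.repr_mul_of_mul_eq_smul (heig : ∀ i, E * b i = w i • b i) (x : A) (j : ι) :
    b.repr (E * x) j = w j * b.repr x j := by
  have h : Finsupp.lapply j ∘ₗ b.repr.toLinearMap ∘ₗ LinearMap.mulLeft K E =
      w j • (Finsupp.lapply j ∘ₗ b.repr.toLinearMap) := by
    refine b.ext fun k => ?_
    obtain rfl | hkj := eq_or_ne k j <;> simp [*]
  exact LinearMap.congr_fun h x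

theorem Module.Basis.eq_repr_smul_of_mul_eq_smul (hw : Function.Injective w)
    (heig : ∀ i, E * b i = w i • b i) {x : A} {i : ι} (hx : E * x = w i • x) :
    x = b.repr x i • b i := by
  refine b.repr.injective (Finsupp.ext fun j => ?_)
  obtain rfl | hji := eq_or_ne j i
  · simp
  · have h := b.repr_mul_of_mul_eq_smul heig x j
    rw [hx, map_smul, Finsupp.smul_apply, smul_eq_mul] at h
    have : b.repr x j = 0 := by
      by_contra hne
      exact hji (hw (mul_right_cancel₀ hne h).symm)
    simp [this, hji]

theorem Module.Basis.mul_self_eq_repr_smul (hw : Function.Injective w)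
    (heig : ∀ i, E * b i = w i • b i) (i : ι) : b i * b i = b.repr (b i * b i) i • b i :=
  b.eq_repr_smul_of_mul_eq_smul hw heig (by rw [← mul_assoc, heig, smul_mul_assoc])

theorem Module.Basis.repr_mul_self_ne_zero (hw : Function.Injective w)
    (heig : ∀ i, E * b i = w i • b i) (i : ι) : b.repr (b i * b i) i ≠ 0 := by
  intro hc
  have hmul : LinearMap.mulLeft K (b i) = 0 := by
    refine b.ext fun j => ?_
    obtain rfl | hij := eq_or_ne i j
    · rw [LinearMap.mulLeft_apply, b.mul_self_eq_repr_smul hw heig i, hc, zero_smul,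
        LinearMap.zero_apply]
    · simpa using mul_eq_zero_of_mul_eq_smul (heig i) (heig j) (hw.ne hij)
  exact b.ne_zero i (by simpa using LinearMap.congr_fun hmul 1)

theorem Module.Basis.exists_orthogonalIdempotents_of_mul_eq_smul (hw : Function.Injective w)
    (heig : ∀ i, E * b i = w i • b i) : ∃ e : Basis ι K A, OrthogonalIdempotents ⇑e := by
  set c : ι → K := fun i => b.repr (b i * b i) i
  have hc (i : ι) : c i ≠ 0 := b.repr_mul_self_ne_zero hw heig i
  refine ⟨b.isUnitSMul (w := fun i => (c i)⁻¹) fun i => (inv_ne_zero (hc i)).isUnit, ?_, ?_⟩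
  · intro i
    rw [IsIdempotentElem, b.isUnitSMul_apply, smul_mul_smul_comm,
      b.mul_self_eq_repr_smul hw heig i, smul_smul]
    exact congrArg (· • b i) (inv_mul_cancel_right₀ (hc i) _)
  · intro i j hij
    rw [b.isUnitSMul_apply, b.isUnitSMul_apply, smul_mul_smul_comm,
      mul_eq_zero_of_mul_eq_smul (heig i) (heig j) (hw.ne hij), smul_zero]

end Eigenbasis

theorem stmt_11_general (U : Type*) [CommRing U] [Algebra ℂ U]
    (μ : ℕ)
    (b : Module.Basis (Fin μ) ℂ U) (E : U) (w : Fin μ → ℂ)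
    (hw : Function.Injective w)
    (heig : ∀ i, E * b i = w i • b i) :
    IsReduced U ∧ Nonempty (U ≃ₐ[ℂ] (Fin μ → ℂ)) := by
  obtain ⟨e, he⟩ := b.exists_orthogonalIdempotents_of_mul_eq_smul hw heig
  let φ := e.algEquivPiOfOrthogonalIdempotents he
  exact ⟨isReduced_of_injective φ φ.injective, ⟨φ⟩⟩

theorem stmt_11 (U : Type*) [CommRing U] [Algebra ℂ U]
    [FiniteDimensional ℂ U]
    (μ : ℕ) (hμ : μ = Module.finrank ℂ U)
    (b : Module.Basis (Fin μ) ℂ U) (E : U) (w : Fin μ → ℂ)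
    (hw : Function.Injective w)
    (heig : ∀ i, E * b i = w i • b i) :
    IsReduced U ∧ Nonempty (U ≃ₐ[ℂ] (Fin μ → ℂ)) :=
  stmt_11_general U μ b E w hw heig
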